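/- Let G be a simple graph that is K_4-free and ⟨P2P3⟩-free. Then for every vertex u of G, the subgraph G[N(u)] induced on the neighborhood of u is K_3-free and C_4-free. (Theorem 1.1, part 3.) -/
import Mathlib


/-- `G` is `H`-free: `G` contains no (not necessarily induced) subgraph isomorphic to `H`,
i.e. there is no injective graph homomorphism from `H` to `G`. -/
def HFree {W V : Type*} (H : SimpleGraph W) (G : SimpleGraph V) : Prop :=
  ¬ ∃ f : H →g G, Function.Injective f

/-- `P₂ ∪ P₃`: the disjoint union of an edge (`0-1`) and a two-edge path (`2-3-4`). -/
def P2P3 : SimpleGraph (Fin 5) :=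
  SimpleGraph.fromRel (fun i j => (i = 0 ∧ j = 1) ∨ (i = 2 ∧ j = 3) ∨ (i = 3 ∧ j = 4))

/-- `⟨P2P3⟩`: the complement of `P₂ ∪ P₃`. -/
def P2P3bar : SimpleGraph (Fin 5) := P2P3ᶜ

/-- `K₄`, the complete graph on four vertices. -/
def K4 : SimpleGraph (Fin 4) := ⊤

/-- `K₃`, the complete graph on three vertices. -/
def K3 : SimpleGraph (Fin 3) := ⊤

/-- `C₄`, the cycle on four vertices: edges `{i, i+1}` in `Fin 4`. -/
def C4 : SimpleGraph (Fin 4) :=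
  SimpleGraph.fromRel (fun i j => j = i + 1)

instance : DecidableRel P2P3.Adj := fun a b =>
  decidable_of_iff _ (SimpleGraph.fromRel_adj _ a b).symm

instance : DecidableRel P2P3bar.Adj := fun a b =>
  inferInstanceAs (Decidable (a ≠ b ∧ ¬ P2P3.Adj a b))

instance : DecidableRel C4.Adj := fun a b =>
  decidable_of_iff _ (SimpleGraph.fromRel_adj _ a b).symm

theorem stmt_10 {V : Type*} (G : SimpleGraph V)
    (h1 : HFree K4 G) (h2 : HFree P2P3bar G) (u : V) :
    HFree K3 (G.induce (G.neighborSet u)) ∧ HFree C4 (G.induce (G.neighborSet u)) := by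
  constructor
  · rintro ⟨f, hf⟩
    apply h1
    have hu : ∀ i : Fin 3, G.Adj u ((f i : G.neighborSet u) : V) := fun i => (f i).2
    have hadj : ∀ i j : Fin 3, i ≠ j → G.Adj ((f i : G.neighborSet u) : V) (f j) := by
      intro i j hij
      exact f.map_adj (by simpa [K3] using hij)
    have hne : ∀ i j : Fin 3, i ≠ j → ((f i : G.neighborSet u) : V) ≠ (f j : V) := by
      intro i j hij h
      exact hij (hf (Subtype.coe_injective h))
    have hnu : ∀ i : Fin 3, ((f i : G.neighborSet u) : V) ≠ u := fun i h =>
      G.irrefl (h ▸ (hu i)).symm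
    refine ⟨⟨![(f 0 : V), (f 1 : V), (f 2 : V), u], ?_⟩, ?_⟩
    · intro a b hab
      have : a ≠ b := by simpa [K4] using hab
      fin_cases a <;> fin_cases b <;>
        first
          | exact absurd rfl this
          | exact hadj _ _ (by decide)
          | exact (hu _).symm
          | exact hu _
    · intro a b hab
      fin_cases a <;> fin_cases b <;>
        simp only [Matrix.cons_val_zero, Matrix.cons_val_one, Matrix.head_cons,
          Matrix.cons_val_two, Matrix.cons_val_three, Matrix.cons_val_four,
          Matrix.tail_cons, Fin.mk_zero, Fin.mk_one] at hab ⊢ <;>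
        first
          | rfl
          | exact absurd hab (hne _ _ (by decide))
          | exact absurd hab (hnu _)
          | exact absurd hab.symm (hnu _)
  · rintro ⟨f, hf⟩
    apply h2
    have hu : ∀ i : Fin 4, G.Adj u ((f i : G.neighborSet u) : V) := fun i => (f i).2
    have hadj : ∀ i j : Fin 4, C4.Adj i j → G.Adj ((f i : G.neighborSet u) : V) (f j) := by
      intro i j hij
      exact f.map_adj hij
    have hne : ∀ i j : Fin 4, i ≠ j → ((f i : G.neighborSet u) : V) ≠ (f j : V) := by
      intro i j hij h
      exact hij (hf (Subtype.coe_injective h))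
    have hnu : ∀ i : Fin 4, ((f i : G.neighborSet u) : V) ≠ u := fun i h =>
      G.irrefl (h ▸ (hu i)).symm
    refine ⟨⟨![(f 0 : V), (f 2 : V), (f 1 : V), (f 3 : V), u], ?_⟩, ?_⟩
    · intro a b hab
      fin_cases a <;> fin_cases b <;>
        simp only [Matrix.cons_val_zero, Matrix.cons_val_one, Matrix.head_cons,
          Matrix.cons_val_two, Matrix.cons_val_three, Matrix.cons_val_four,
          Matrix.tail_cons] <;>
        first
          | exact absurd hab (by decide)
          | exact hadj 0 1 (by decide)
          | exact hadj 1 2 (by decide)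
          | exact hadj 2 3 (by decide)
          | exact hadj 3 0 (by decide)
          | exact (hadj 0 1 (by decide)).symm
          | exact (hadj 1 2 (by decide)).symm
          | exact (hadj 2 3 (by decide)).symm
          | exact (hadj 3 0 (by decide)).symm
          | exact (hu _).symm
          | exact hu _
    · intro a b hab
      fin_cases a <;> fin_cases b <;>
        simp only [Matrix.cons_val_zero, Matrix.cons_val_one, Matrix.head_cons,
          Matrix.cons_val_two, Matrix.cons_val_three, Matrix.cons_val_four,
          Matrix.tail_cons, Fin.mk_zero, Fin.mk_one] at hab ⊢ <;>
        first
          | rfl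
          | exact absurd hab (hne _ _ (by decide))
          | exact absurd hab (hnu _)
          | exact absurd hab.symm (hnu _)
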